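/- arXiv:2501.04710 — 2 statements merged into one kernel-verified Lean document; each statement's English description precedes it below -/
import Mathlib

section
/- Let N ≥ 1, let A be a real (3N)×(3N) matrix with strictly positive diagonal entries A_{ii} > 0 for all i, and let b ∈ ℝ^{3N}. Consider the Jacobi-like iteration producing a sequence of vectors u^{(k)} ∈ ℝ^{3N} defined by: for every index i whose position within its block of three is not the third one (i.e., i mod 3 ≠ 2 in 0-based indexing), A_{ii} u_i^{(k+1)} = b_i − ∑_{j ≠ i} A_{ij} u_j^{(k)}; and for every index i with i mod 3 = 2 (0-based), A_{ii} u_i^{(k+1)} = max( b_i − ∑_{j ≠ i} A_{ij} u_j^{(k)}, 0 ). If the sequence u^{(k)} converges to a limit u ∈ ℝ^{3N}, then u solves the complementarity system: (Au − b)_i = 0 for every index i with i mod 3 ≠ 2, and min( u_i, (Au − b)_i ) = 0 for every index i with i mod 3 = 2. -/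
open Filter Topology

/-- If the Jacobi-like iteration (with positive-part projection on every third
component) converges, then the limit solves the complementarity system. -/
theorem stmt_0 (N : ℕ) (hN : 1 ≤ N)
    (A : Matrix (Fin (3 * N)) (Fin (3 * N)) ℝ)
    (hdiag : ∀ i, 0 < A i i)
    (b : Fin (3 * N) → ℝ)
    (u : ℕ → Fin (3 * N) → ℝ)
    (hstep₁ : ∀ (k : ℕ) (i : Fin (3 * N)), (i : ℕ) % 3 ≠ 2 →
      A i i * u (k + 1) i =
        b i - ∑ j ∈ Finset.univ.filter (fun j => j ≠ i), A i j * u k j)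
    (hstep₂ : ∀ (k : ℕ) (i : Fin (3 * N)), (i : ℕ) % 3 = 2 →
      A i i * u (k + 1) i =
        max (b i - ∑ j ∈ Finset.univ.filter (fun j => j ≠ i), A i j * u k j) 0)
    (L : Fin (3 * N) → ℝ)
    (hconv : Tendsto u atTop (𝓝 L)) :
    (∀ i : Fin (3 * N), (i : ℕ) % 3 ≠ 2 → (A.mulVec L - b) i = 0) ∧
    (∀ i : Fin (3 * N), (i : ℕ) % 3 = 2 → min (L i) ((A.mulVec L - b) i) = 0) := by
  have hL : ∀ j, Tendsto (fun k => u k j) atTop (𝓝 (L j)) := fun j =>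
    (tendsto_pi_nhds.mp hconv) j
  have hS : ∀ i : Fin (3 * N),
      Tendsto (fun k => b i - ∑ j ∈ Finset.univ.filter (fun j => j ≠ i), A i j * u k j)
        atTop (𝓝 (b i - ∑ j ∈ Finset.univ.filter (fun j => j ≠ i), A i j * L j)) := by
    intro i
    exact tendsto_const_nhds.sub
      (tendsto_finset_sum _ fun j _ => tendsto_const_nhds.mul (hL j))
  have hLeft : ∀ i, Tendsto (fun k => A i i * u (k + 1) i) atTop (𝓝 (A i i * L i)) := by
    intro i
    exact tendsto_const_nhds.mul ((hL i).comp (tendsto_add_atTop_nat 1))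
  -- decomposition of the matrix-vector product
  have hdec : ∀ i : Fin (3 * N),
      (A.mulVec L - b) i =
        A i i * L i - (b i - ∑ j ∈ Finset.univ.filter (fun j => j ≠ i), A i j * L j) := by
    intro i
    have hsplit : ∑ j, A i j * L j =
        A i i * L i + ∑ j ∈ Finset.univ.filter (fun j => j ≠ i), A i j * L j := by
      have hfe : Finset.univ.filter (fun j => j ≠ i) = Finset.univ.erase i := by
        ext j; simp [Finset.mem_erase]
      rw [hfe, ← Finset.add_sum_erase Finset.univ (fun j => A i j * L j) (Finset.mem_univ i)]
    simp only [Pi.sub_apply, Matrix.mulVec, dotProduct, hsplit]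
    ring
  constructor
  · intro i hi
    have heq : A i i * L i =
        b i - ∑ j ∈ Finset.univ.filter (fun j => j ≠ i), A i j * L j := by
      refine tendsto_nhds_unique ?_ (hS i)
      have : (fun k => A i i * u (k + 1) i) =
          (fun k => b i - ∑ j ∈ Finset.univ.filter (fun j => j ≠ i), A i j * u k j) := by
        funext k; exact hstep₁ k i hi
      rw [← this]; exact hLeft i
    rw [hdec i, heq, sub_self]
  · intro i hi
    have heq : A i i * L i =
        max (b i - ∑ j ∈ Finset.univ.filter (fun j => j ≠ i), A i j * L j) 0 := by
      refine tendsto_nhds_unique ?_ ((hS i).max tendsto_const_nhds)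
      have : (fun k => A i i * u (k + 1) i) =
          (fun k => max (b i - ∑ j ∈ Finset.univ.filter (fun j => j ≠ i), A i j * u k j) 0) := by
        funext k; exact hstep₂ k i hi
      rw [← this]; exact hLeft i
    set S := b i - ∑ j ∈ Finset.univ.filter (fun j => j ≠ i), A i j * L j with hSdef
    have hLnn : 0 ≤ L i := by
      have h0 : 0 ≤ A i i * L i := heq ▸ le_max_right _ _
      exact nonneg_of_mul_nonneg_right h0 (hdiag i)
    rcases le_or_gt 0 S with hpos | hneg
    · have : (A.mulVec L - b) i = 0 := by
        rw [hdec i, ← hSdef, heq, max_eq_left hpos, sub_self]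
      rw [this]; exact min_eq_right hLnn
    · have hL0 : L i = 0 := by
        have : A i i * L i = 0 := by rw [heq, max_eq_right hneg.le]
        exact (mul_eq_zero.mp this).resolve_left (ne_of_gt (hdiag i))
      have hAb : 0 ≤ (A.mulVec L - b) i := by
        rw [hdec i, ← hSdef, heq, max_eq_right hneg.le, zero_sub]
        linarith
      rw [hL0]; exact min_eq_left hAb
end

section
/- Let N ≥ 1, let ε > 0, and define f : ℝ^N → ℝ by f(t) = (1/2) ∑_{i=1}^N (min(t_i, 0))². Suppose x, s ∈ ℝ^N and μ ∈ ℝ satisfy x_i s_i = μ for every i and f(x) + f(s) + μ² + εμ = 0. If x_{i₀} < 0 for some index i₀, then s_{i₀} > 0. -/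
/-- At a solution of the NPIP system, if some component `x i₀` is strictly
negative, then the corresponding `s i₀` is strictly positive. -/
theorem stmt_10 (N : ℕ) (hN : 1 ≤ N) (ε : ℝ) (hε : 0 < ε)
    (f : (Fin N → ℝ) → ℝ)
    (hf : ∀ t, f t = (1 / 2 : ℝ) * ∑ i, (min (t i) 0) ^ 2)
    (x s : Fin N → ℝ) (μ : ℝ)
    (hcomp : ∀ i, x i * s i = μ)
    (hsys : f x + f s + μ ^ 2 + ε * μ = 0)
    (i₀ : Fin N) (hi₀ : x i₀ < 0) :
    s i₀ > 0 := by
  have hfnn : ∀ t : Fin N → ℝ, 0 ≤ f t := by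
    intro t; rw [hf]; positivity
  have hμle : μ ^ 2 + ε * μ ≤ 0 := by
    have := hfnn x; have := hfnn s; linarith
  have hμ0 : μ ≤ 0 := by nlinarith
  by_contra h
  push_neg at h
  have hμge : 0 ≤ μ := by
    rw [← hcomp i₀]; nlinarith [hi₀, h]
  have hμ : μ = 0 := le_antisymm hμ0 hμge
  have hs0 : s i₀ = 0 := by
    have := hcomp i₀; rw [hμ] at this
    rcases mul_eq_zero.mp this with h1 | h2
    · exact absurd h1 (ne_of_lt hi₀)
    · exact h2
  have hfx : (1/2 : ℝ) * (min (x i₀) 0) ^ 2 ≤ f x := by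
    rw [hf]
    have : (min (x i₀) 0) ^ 2 ≤ ∑ i, (min (x i) 0) ^ 2 := by
      exact Finset.single_le_sum (f := fun i => (min (x i) 0)^2) (fun i _ => by positivity) (Finset.mem_univ i₀)
    nlinarith
  have hmin : min (x i₀) 0 = x i₀ := min_eq_left (le_of_lt hi₀)
  rw [hmin] at hfx
  have := hfnn s
  rw [hμ] at hsys
  nlinarith
end
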